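/- Let M ∈ ℂ^{X×X} be a Hermitian matrix, K ⊆ X, and H ∈ ℂ^{K×K} a normal matrix. If K is H-cospectral in M, then for any real number Q, K is H-cospectral in M + Q·D_K, where D_K is the diagonal 0/1 matrix with 1's exactly on K. -/

import Mathlib

open Matrix Set

variable {X : Type*}

/-- The standard Hermitian inner product `⟨v,w⟩ = v* w`. -/
noncomputable def hermInner {n : Type*} [Fintype n] (v w : n → ℂ) : ℂ :=
  ∑ x, star (v x) * w x

/-- Restriction of a vector on `X` to the coordinates in `K`. -/
def restr (K : Set X) (ψ : X → ℂ) : K → ℂ := fun k => ψ k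

/-- Extension of a vector on `K` by zeros to all of `X`. -/
def extz (K : Set X) [DecidablePred (· ∈ K)] (v : K → ℂ) : X → ℂ :=
  fun x => if h : x ∈ K then v ⟨x, h⟩ else 0

/-- The `K × K` submatrix of a matrix indexed by `X`. -/
def subK (K : Set X) (A : Matrix X X ℂ) : Matrix K K ℂ :=
  A.submatrix (fun k : K => (k : X)) (fun k : K => (k : X))

/-- `K` is `H`-cospectral in `M`: `M` has an orthonormal eigenbasis each of whose members
restricts on `K` either to zero or to an eigenvector of `H`. -/
noncomputable def IsHCospectral [Fintype X] [DecidableEq X] (K : Set X) [DecidablePred (· ∈ K)]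
    (M : Matrix X X ℂ) (H : Matrix K K ℂ) : Prop :=
  ∃ ψ : X → (X → ℂ),
    (∀ a b, hermInner (ψ a) (ψ b) = if a = b then 1 else 0) ∧
    (∀ a, ∃ μ : ℂ, M.mulVec (ψ a) = μ • ψ a) ∧
    (∀ a, restr K (ψ a) = 0 ∨
      (restr K (ψ a) ≠ 0 ∧ ∃ μ : ℂ, H.mulVec (restr K (ψ a)) = μ • restr K (ψ a)))

/-! Group the eigenbasis `ψ` of `M` into blocks according to the `H`-eigenvalue of the
restriction `(ψ a)|_K`, with one extra block for the vectors vanishing on `K`. In the basis `ψ`,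
`M` is diagonal and `D_K` has entries `⟨(ψ a)|_K, (ψ b)|_K⟩`, which vanish across blocks because
eigenvectors of the normal matrix `H` for distinct eigenvalues are orthogonal. So `M + Q D_K` is
block diagonal in the basis `ψ`. Diagonalising each Hermitian block gives an orthonormal
eigenbasis of `M + Q D_K` whose members are combinations of `ψ`'s from a single block, so their
restrictions to `K` are still zero or eigenvectors of `H`. -/

open scoped ComplexOrder

section HermInner

variable {ι n : Type*} [Fintype n]

lemma hermInner_eq_star_dotProduct (v w : n → ℂ) : hermInner v w = star v ⬝ᵥ w := rfl

lemma hermInner_add_right (u v w : n → ℂ) :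
    hermInner u (v + w) = hermInner u v + hermInner u w :=
  dotProduct_add _ _ _

lemma hermInner_smul_right (c : ℂ) (v w : n → ℂ) : hermInner v (c • w) = c * hermInner v w :=
  dotProduct_smul _ _ _

lemma hermInner_mulVec_right (A : Matrix n n ℂ) (v w : n → ℂ) :
    hermInner v (A *ᵥ w) = hermInner (Aᴴ *ᵥ v) w := by
  simp only [hermInner_eq_star_dotProduct, star_mulVec, conjTranspose_conjTranspose,
    dotProduct_mulVec]

lemma conjTranspose_mul_mul_apply (ψ : ι → n → ℂ) (N : Matrix n n ℂ) (a b : ι) :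
    ((of fun x a => ψ a x)ᴴ * N * of fun x a => ψ a x) a b = hermInner (ψ a) (N *ᵥ ψ b) := by
  rw [Matrix.mul_assoc, mul_apply]
  simp [hermInner, mul_apply, mulVec, dotProduct]

def IsOrthonormalFamily [DecidableEq ι] (ψ : ι → n → ℂ) : Prop :=
  ∀ a b, hermInner (ψ a) (ψ b) = if a = b then 1 else 0

lemma IsOrthonormalFamily.conjTranspose_mul_self [DecidableEq ι] {ψ : ι → n → ℂ}
    (hψ : IsOrthonormalFamily ψ) : (of fun x a => ψ a x)ᴴ * of (fun x a => ψ a x) = 1 := by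
  ext a b
  rw [mul_apply, one_apply, ← hψ a b]
  rfl

lemma OrthonormalBasis.isOrthonormalFamily [DecidableEq ι] [Fintype ι]
    (B : OrthonormalBasis ι ℂ (EuclideanSpace ℂ n)) : IsOrthonormalFamily fun i => ⇑(B i) := by
  intro i j
  rw [← orthonormal_iff_ite.mp B.orthonormal i j, EuclideanSpace.inner_eq_star_dotProduct,
    dotProduct_comm]
  rfl

end HermInner

section NormalMatrix

variable {n : Type*} [Fintype n] {H : Matrix n n ℂ}

lemma conjTranspose_mulVec_eq_zero_of_commute (hH : Commute H Hᴴ) {v : n → ℂ}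
    (hv : H *ᵥ v = 0) : Hᴴ *ᵥ v = 0 := by
  rw [← dotProduct_star_self_eq_zero, star_mulVec, conjTranspose_conjTranspose,
    ← dotProduct_mulVec, mulVec_mulVec, hH.eq, ← mulVec_mulVec, hv, mulVec_zero, dotProduct_zero]

lemma conjTranspose_mulVec_eq_star_smul [DecidableEq n] (hH : Commute H Hᴴ) {α : ℂ} {v : n → ℂ}
    (hv : H *ᵥ v = α • v) : Hᴴ *ᵥ v = star α • v := by
  have hcomm : Commute (H - α • 1) (H - α • 1)ᴴ := by
    simp only [conjTranspose_sub, conjTranspose_smul, conjTranspose_one]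
    rw [commute_iff_eq]
    simp only [sub_mul, mul_sub, smul_mul_assoc, mul_smul_comm, one_mul, mul_one, hH.eq]
    module
  have hv' : (H - α • 1) *ᵥ v = 0 := by rw [sub_mulVec, hv, smul_mulVec, one_mulVec, sub_self]
  have := conjTranspose_mulVec_eq_zero_of_commute hcomm hv'
  rwa [conjTranspose_sub, conjTranspose_smul, conjTranspose_one, sub_mulVec, smul_mulVec,
    one_mulVec, sub_eq_zero] at this

lemma hermInner_eq_zero_of_eigenvalue_ne [DecidableEq n] (hH : Commute H Hᴴ) {α β : ℂ}
    {u v : n → ℂ} (hu : H *ᵥ u = α • u) (hv : H *ᵥ v = β • v) (hαβ : α ≠ β) :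
    hermInner u v = 0 := by
  have key : β * hermInner u v = α * hermInner u v := by
    rw [← hermInner_smul_right, ← hv, hermInner_mulVec_right,
      conjTranspose_mulVec_eq_star_smul hH hu]
    simp [hermInner_eq_star_dotProduct]
  have h0 : (β - α) * hermInner u v = 0 := by rw [sub_mul, key, sub_self]
  exact (mul_eq_zero.1 h0).resolve_left (sub_ne_zero.2 hαβ.symm)

end NormalMatrix

section ExtendByZero

variable (K : Set X) [DecidablePred (· ∈ K)]

@[simp]
lemma restr_extz (v : K → ℂ) : restr K (extz K v) = v := by
  funext k
  simp [restr, extz]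

lemma restr_extz_of_disjoint {L : Set X} (hKL : Disjoint K L) (v : K → ℂ) :
    restr L (extz K v) = 0 := by
  funext l
  simp [restr, extz, hKL.notMem_of_mem_right l.2]

lemma extz_smul (c : ℂ) (v : K → ℂ) : extz K (c • v) = c • extz K v := by
  funext x
  by_cases hx : x ∈ K <;> simp [extz, hx]

variable [Fintype X]

lemma dotProduct_extz (u : X → ℂ) (v : K → ℂ) : u ⬝ᵥ extz K v = restr K u ⬝ᵥ v := by
  rw [dotProduct, ← Fintype.sum_subtype_add_sum_subtype (· ∈ K)]
  have hout : ∑ x : {x // x ∉ K}, u x * extz K v x = 0 :=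
    Finset.sum_eq_zero fun x _ => by simp [extz, x.2]
  rw [hout, add_zero]
  simp [extz, restr, dotProduct]

lemma hermInner_extz_right (u : X → ℂ) (v : K → ℂ) :
    hermInner u (extz K v) = hermInner (restr K u) v :=
  dotProduct_extz K (star u) v

lemma hermInner_extz_extz (v w : K → ℂ) : hermInner (extz K v) (extz K w) = hermInner v w := by
  rw [hermInner_extz_right, restr_extz]

lemma hermInner_extz_extz_of_disjoint {L : Set X} [DecidablePred (· ∈ L)] (hKL : Disjoint K L)
    (v : K → ℂ) (w : L → ℂ) : hermInner (extz K v) (extz L w) = 0 := by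
  rw [hermInner_extz_right, restr_extz_of_disjoint K hKL]
  simp [hermInner_eq_star_dotProduct]

lemma mulVec_extz {A : Matrix X X ℂ} (hA : ∀ x y, x ∉ K → y ∈ K → A x y = 0) (v : K → ℂ) :
    A *ᵥ extz K v = extz K (subK K A *ᵥ v) := by
  funext x
  rw [mulVec, dotProduct_extz]
  by_cases hx : x ∈ K
  · simp only [extz, hx, dite_true]
    rfl
  · have : restr K (fun y => A x y) = 0 := funext fun y => hA x y hx y.2
    simp [extz, hx, this]

lemma diagonal_indicator_mulVec [DecidableEq X] (v : X → ℂ) :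
    diagonal (fun x => if x ∈ K then (1 : ℂ) else 0) *ᵥ v = extz K (restr K v) := by
  funext x
  by_cases hx : x ∈ K <;> simp [mulVec_diagonal, extz, restr, hx]

end ExtendByZero

section EigenspaceOrBot

variable {n : Type*} [Fintype n] [DecidableEq n] (H : Matrix n n ℂ)

def eigenspaceOrBot : Option ℂ → Submodule ℂ (n → ℂ)
  | none => ⊥
  | some μ => Module.End.eigenspace (toLin' H) μ

lemma mem_eigenspaceOrBot_some {μ : ℂ} {v : n → ℂ} :
    v ∈ eigenspaceOrBot H (some μ) ↔ H *ᵥ v = μ • v := by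
  simp [eigenspaceOrBot]

lemma exists_mem_eigenspaceOrBot_iff {v : n → ℂ} :
    (∃ o, v ∈ eigenspaceOrBot H o) ↔ v = 0 ∨ (v ≠ 0 ∧ ∃ μ : ℂ, H *ᵥ v = μ • v) := by
  constructor
  · rintro ⟨_ | μ, hv⟩
    · exact Or.inl ((Submodule.mem_bot ℂ).1 hv)
    · by_cases hv0 : v = 0
      · exact Or.inl hv0
      · exact Or.inr ⟨hv0, μ, (mem_eigenspaceOrBot_some H).1 hv⟩
  · rintro (hv0 | ⟨-, μ, hμ⟩)
    · exact ⟨none, (Submodule.mem_bot ℂ).2 hv0⟩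
    · exact ⟨some μ, (mem_eigenspaceOrBot_some H).2 hμ⟩

lemma hermInner_eq_zero_of_mem_eigenspaceOrBot {H : Matrix n n ℂ} (hH : Commute H Hᴴ)
    {o o' : Option ℂ} (hoo' : o ≠ o') {u v : n → ℂ} (hu : u ∈ eigenspaceOrBot H o)
    (hv : v ∈ eigenspaceOrBot H o') : hermInner u v = 0 := by
  match o, o', hu, hv with
  | none, _, hu, _ => simp [(Submodule.mem_bot ℂ).1 hu, hermInner_eq_star_dotProduct]
  | _, none, _, hv => simp [(Submodule.mem_bot ℂ).1 hv, hermInner_eq_star_dotProduct]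
  | some α, some β, hu, hv =>
    exact hermInner_eq_zero_of_eigenvalue_ne hH ((mem_eigenspaceOrBot_some H).1 hu)
      ((mem_eigenspaceOrBot_some H).1 hv) (fun h => hoo' (h ▸ rfl))

end EigenspaceOrBot

section BlockDiagonalization

variable {κ : Type*} [Fintype X] [DecidableEq X]

theorem exists_orthonormal_eigenbasis_of_block {A : Matrix X X ℂ} (hA : A.IsHermitian)
    (c : X → κ) (hblock : ∀ a b, c a ≠ c b → A a b = 0) :
    ∃ (w : X → X → ℂ) (t : X → ℝ), IsOrthonormalFamily w ∧
      (∀ a, A *ᵥ w a = (t a : ℂ) • w a) ∧ ∀ a b, c b ≠ c a → w a b = 0 := by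
  classical
  let blk (o : κ) : Set X := {x | c x = o}
  have hsub (o : κ) : (subK (blk o) A).IsHermitian := hA.submatrix _
  let v (o : κ) (i : blk o) : X → ℂ := extz (blk o) ((hsub o).eigenvectorBasis i)
  have horth (o o' : κ) (i : blk o) (j : blk o') :
      hermInner (v o i) (v o' j) = if (i : X) = j then 1 else 0 := by
    by_cases hoo' : o = o'
    · subst hoo'
      rw [hermInner_extz_extz, (hsub o).eigenvectorBasis.isOrthonormalFamily]
      exact if_congr Subtype.ext_iff rfl rfl
    · have hij : (i : X) ≠ j := fun h => hoo' (i.2.symm.trans ((congrArg c h).trans j.2))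
      rw [if_neg hij]
      refine hermInner_extz_extz_of_disjoint _ ?_ _ _
      exact Set.disjoint_left.2 fun x hx hx' => hoo' (hx.symm.trans hx')
  have heig (o : κ) (i : blk o) : A *ᵥ v o i = ((hsub o).eigenvalues i : ℂ) • v o i := by
    dsimp only [v]
    rw [mulVec_extz (blk o) (fun x y hx hy => hblock x y fun h => hx (h.trans hy)),
      (hsub o).mulVec_eigenvectorBasis, ← extz_smul, Complex.coe_smul]
  refine ⟨fun a => v (c a) ⟨a, rfl⟩, fun a => (hsub (c a)).eigenvalues ⟨a, rfl⟩,
    fun a b => horth _ _ _ _, fun a => heig _ _, fun a b hb => dif_neg hb⟩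

theorem exists_orthonormal_eigenbasis_mem_span {N : Matrix X X ℂ} (hN : N.IsHermitian)
    {ψ : X → X → ℂ} (hψ : IsOrthonormalFamily ψ) (c : X → κ)
    (hblock : ∀ a b, c a ≠ c b → hermInner (ψ a) (N *ᵥ ψ b) = 0) :
    ∃ φ : X → X → ℂ, IsOrthonormalFamily φ ∧ (∀ a, ∃ μ : ℂ, N *ᵥ φ a = μ • φ a) ∧
      ∀ a, φ a ∈ Submodule.span ℂ (ψ '' {b | c b = c a}) := by
  let U : Matrix X X ℂ := of fun x a => ψ a x
  have hU : Uᴴ * U = 1 := hψ.conjTranspose_mul_self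
  have hA : (Uᴴ * N * U).IsHermitian := by
    rw [IsHermitian, conjTranspose_mul, conjTranspose_mul, conjTranspose_conjTranspose, hN.eq,
      Matrix.mul_assoc]
  obtain ⟨w, t, hw, hwt, hwc⟩ := exists_orthonormal_eigenbasis_of_block hA c
    fun a b hab => (conjTranspose_mul_mul_apply ψ N a b).trans (hblock a b hab)
  have hUN : N * U = U * (Uᴴ * N * U) := by
    rw [← Matrix.mul_assoc, ← Matrix.mul_assoc, mul_eq_one_comm.1 hU, Matrix.one_mul]
  refine ⟨fun a => U *ᵥ w a, fun a b => ?_, fun a => ⟨t a, ?_⟩, fun a => ?_⟩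
  · rw [← hw a b, hermInner_mulVec_right, mulVec_mulVec, hU, one_mulVec]
  · rw [mulVec_mulVec, hUN, ← mulVec_mulVec, hwt, mulVec_smul]
  · have hcomb : U *ᵥ w a = ∑ b, w a b • ψ b := by
      funext x
      simp [U, mulVec, dotProduct, mul_comm]
    change U *ᵥ w a ∈ _
    rw [hcomb]
    refine Submodule.sum_mem _ fun b _ => ?_
    by_cases hb : c b = c a
    · exact Submodule.smul_mem _ _ (Submodule.subset_span ⟨b, hb, rfl⟩)
    · rw [hwc a b hb, zero_smul]
      exact Submodule.zero_mem _

end BlockDiagonalization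

section Cospectral

variable [Fintype X] [DecidableEq X] {K : Set X} [DecidablePred (· ∈ K)]

theorem isHCospectral_of_hermInner_eq_zero {N : Matrix X X ℂ} (hN : N.IsHermitian)
    (H : Matrix K K ℂ) {ψ : X → X → ℂ} (hψ : IsOrthonormalFamily ψ) (c : X → Option ℂ)
    (hc : ∀ a, restr K (ψ a) ∈ eigenspaceOrBot H (c a))
    (hblock : ∀ a b, c a ≠ c b → hermInner (ψ a) (N *ᵥ ψ b) = 0) :
    IsHCospectral K N H := by
  obtain ⟨φ, hφ, hφN, hφψ⟩ := exists_orthonormal_eigenbasis_mem_span hN hψ c hblock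
  refine ⟨φ, hφ, hφN, fun a => (exists_mem_eigenspaceOrBot_iff H).1 ⟨c a, ?_⟩⟩
  have hrestr : restr K = LinearMap.funLeft ℂ ℂ ((↑) : K → X) := rfl
  rw [hrestr, ← Submodule.mem_comap]
  refine Submodule.span_le.2 ?_ (hφψ a)
  rintro _ ⟨b, hb, rfl⟩
  exact hb ▸ hc b

end Cospectral

theorem stmt_9 {X : Type*} [Fintype X] [DecidableEq X]
    (K : Set X) [DecidablePred (· ∈ K)]
    (M : Matrix X X ℂ) (hMherm : Mᴴ = M)
    (H : Matrix K K ℂ) (hHnormal : H * Hᴴ = Hᴴ * H)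
    (hcosp : IsHCospectral K M H) (Q : ℝ) :
    IsHCospectral K
      (M + (Q : ℂ) • Matrix.diagonal (fun x => if x ∈ K then (1 : ℂ) else 0)) H := by
  obtain ⟨ψ, hψ, hψM, hψH⟩ := hcosp
  choose μ hμ using hψM
  choose c hc using fun a => (exists_mem_eigenspaceOrBot_iff H).2 (hψH a)
  have hD : (diagonal fun x => if x ∈ K then (1 : ℂ) else 0).IsHermitian :=
    isHermitian_diagonal_iff.2 fun x => by split_ifs <;> simp
  have hN : (M + (Q : ℂ) • diagonal fun x => if x ∈ K then (1 : ℂ) else 0).IsHermitian :=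
    IsHermitian.add hMherm (hD.smul (Complex.conj_ofReal Q))
  refine isHCospectral_of_hermInner_eq_zero hN H hψ c hc fun a b hab => ?_
  have hab' : a ≠ b := fun h => hab (congrArg c h)
  rw [add_mulVec, smul_mulVec, hermInner_add_right, hermInner_smul_right, hμ b,
    hermInner_smul_right, hψ a b, if_neg hab', diagonal_indicator_mulVec, hermInner_extz_right,
    hermInner_eq_zero_of_mem_eigenspaceOrBot hHnormal hab (hc a) (hc b)]
  simp
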